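/- Let A and B be nondegenerate observables on ℂ² with orthonormal eigenbases, and let E(A,B) = {(H(A|ρ), H(B|ρ)) : ρ a 2×2 density matrix} ⊆ ℝ². Then the set of noise pairs {(N(M,A), N(M,B)) : (M_m)_m a POVM on ℂ²} equals the convex hull of E(A,B). -/

import Mathlib

open Matrix
open scoped ComplexOrder

noncomputable section

/-- The binary-entropy-type function `h(x) = -((1+x)/2)·log₂((1+x)/2) - ((1-x)/2)·log₂((1-x)/2)`
(with the convention `0·log₂ 0 = 0`, automatic since `Real.logb 2 0 = 0`). -/
def hFun (x : ℝ) : ℝ :=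
  -(((1 + x) / 2) * Real.logb 2 ((1 + x) / 2)) - ((1 - x) / 2) * Real.logb 2 ((1 - x) / 2)

/-- `g : [0,1] → [0,1]` is the inverse of `h` on `[0,1]`. -/
def gFun : ℝ → ℝ := Function.invFunOn hFun (Set.Icc 0 1)

/-- The (real) quadratic form `⟨v|M|v⟩`. -/
def qform {d : ℕ} (M : Matrix (Fin d) (Fin d) ℂ) (v : Fin d → ℂ) : ℝ :=
  (star v ⬝ᵥ M.mulVec v).re

/-- `v` is an orthonormal basis (family) of `ℂ^d`. -/
def IsONB {d : ℕ} (v : Fin d → Fin d → ℂ) : Prop :=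
  ∀ i j, star (v i) ⬝ᵥ v j = if i = j then 1 else 0

/-- A POVM: a finite family of positive semidefinite matrices summing to the identity. -/
def IsPOVM {d : ℕ} {ι : Type*} [Fintype ι] (M : ι → Matrix (Fin d) (Fin d) ℂ) : Prop :=
  (∀ m, (M m).PosSemidef) ∧ ∑ m, M m = 1

/-- A density matrix: positive semidefinite with trace 1. -/
def IsDensity {d : ℕ} (ρ : Matrix (Fin d) (Fin d) ℂ) : Prop :=
  ρ.PosSemidef ∧ ρ.trace = 1

/-- The noise `N(M,A) = -Σ_{m,a} p(m,a)·log₂(p(m,a)/p(m))` with `p(m,a) = (1/d)·⟨a|M_m|a⟩`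
and `p(m) = (1/d)·Tr[M_m]`, for an observable `A` with orthonormal eigenbasis `v`. -/
def noise {d : ℕ} {ι : Type*} [Fintype ι] (M : ι → Matrix (Fin d) (Fin d) ℂ)
    (v : Fin d → Fin d → ℂ) : ℝ :=
  -∑ m, ∑ a, ((1 / (d : ℝ)) * qform (M m) (v a)) *
      Real.logb 2 (((1 / (d : ℝ)) * qform (M m) (v a)) / ((1 / (d : ℝ)) * (M m).trace.re))

/-- `H(A|ρ) = -Σ_a ⟨a|ρ|a⟩·log₂⟨a|ρ|a⟩` for an observable with orthonormal eigenbasis `v`. -/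
def Hobs {d : ℕ} (v : Fin d → Fin d → ℂ) (ρ : Matrix (Fin d) (Fin d) ℂ) : ℝ :=
  -∑ a, qform ρ (v a) * Real.logb 2 (qform ρ (v a))

/-- Conditional Shannon entropy `H(X|Y) = -Σ_{x,y} p(x,y)·log₂(p(x,y)/p(y))` of a finite joint
distribution, conditioning on the second variable. -/
def condEnt {X Y : Type*} [Fintype X] [Fintype Y] (p : X → Y → ℝ) : ℝ :=
  -∑ x, ∑ y, p x y * Real.logb 2 (p x y / ∑ x', p x' y)

/-- Pauli matrix σ_x. -/
def σx : Matrix (Fin 2) (Fin 2) ℂ := !![0, 1; 1, 0]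
/-- Pauli matrix σ_y. -/
def σy : Matrix (Fin 2) (Fin 2) ℂ := !![0, -Complex.I; Complex.I, 0]
/-- Pauli matrix σ_z. -/
def σz : Matrix (Fin 2) (Fin 2) ℂ := !![1, 0; 0, -1]

/-- `v·σ = v₁σ_x + v₂σ_y + v₃σ_z` for `v ∈ ℝ³`. -/
def vecσ (v : Fin 3 → ℝ) : Matrix (Fin 2) (Fin 2) ℂ :=
  (v 0 : ℂ) • σx + (v 1 : ℂ) • σy + (v 2 : ℂ) • σz

/-- The canonical orthonormal eigenbasis of σ_z. -/
def basisZ : Fin 2 → Fin 2 → ℂ := fun i j => if i = j then 1 else 0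

/-- The canonical orthonormal eigenbasis `|±x⟩` of σ_x. -/
def basisX : Fin 2 → Fin 2 → ℂ := fun i =>
  ![((1 / Real.sqrt 2 : ℝ) : ℂ),
    if i = 0 then ((1 / Real.sqrt 2 : ℝ) : ℂ) else (-(1 / Real.sqrt 2 : ℝ) : ℂ)]

/-- Eigenvalues `+1, -1` of a (nondegenerate) Pauli observable. -/
def pmEig : Fin 2 → ℂ := fun i => if i = 0 then 1 else -1

end

/-!
Write each effect as `M m = t m • ρ m` with `t m = Tr (M m)` and `ρ m` a state. For any orthonormal
basis the noise of `M` is then `∑ m, (t m / d) * H(·|ρ m)`, and the weights `t m / d` sum to `1`,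
so the pair of noises lies in the convex hull of `E(A,B)`. Conversely, the set of noise pairs is
convex (scale two POVMs and take their disjoint union), and it contains `E(A,B)`: for a qubit
state `ρ`, `1 - ρ = adj ρ` is again a state with the complementary basis probabilities, so the
two-outcome POVM `{ρ, 1 - ρ}` has noise `(H(·|ρ) + H(·|1 - ρ)) / 2 = H(·|ρ)`.
-/

section
variable {d : ℕ} {ι κ : Type*} [Fintype ι] [Fintype κ]

@[simp]
lemma qform_zero (x : Fin d → ℂ) : qform 0 x = 0 := by
  simp [qform]

lemma qform_smul (c : ℝ) (M : Matrix (Fin d) (Fin d) ℂ) (x : Fin d → ℂ) :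
    qform (c • M) x = c * qform M x := by
  simp [qform, Matrix.smul_mulVec, dotProduct_smul]

lemma qform_sub (M N : Matrix (Fin d) (Fin d) ℂ) (x : Fin d → ℂ) :
    qform (M - N) x = qform M x - qform N x := by
  simp [qform, Matrix.sub_mulVec, dotProduct_sub]

lemma IsONB.qform_one {v : Fin d → Fin d → ℂ} (hv : IsONB v) (a : Fin d) :
    qform 1 (v a) = 1 := by
  simpa [qform] using congrArg Complex.re (hv a a)

lemma IsONB.sum_qform {v : Fin d → Fin d → ℂ} (hv : IsONB v) (M : Matrix (Fin d) (Fin d) ℂ) :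
    ∑ a, qform M (v a) = M.trace.re := by
  set U : Matrix (Fin d) (Fin d) ℂ := Matrix.of fun i a => v a i
  have hU : Uᴴ * U = 1 := by
    ext a b
    simpa [U, Matrix.mul_apply, Matrix.one_apply, dotProduct] using hv a b
  have hdiag : ∀ a, star (v a) ⬝ᵥ M *ᵥ v a = (Uᴴ * M * U) a a := by
    intro a
    simp only [U, Matrix.mul_apply, Matrix.conjTranspose_apply, Matrix.of_apply, dotProduct,
      Matrix.mulVec, Finset.sum_mul, Finset.mul_sum, Pi.star_apply]
    rw [Finset.sum_comm]
    exact Finset.sum_congr rfl fun i _ => Finset.sum_congr rfl fun j _ => by ring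
  have htrace : (Uᴴ * M * U).trace = M.trace := by
    rw [Matrix.mul_assoc, Matrix.trace_mul_comm, Matrix.mul_assoc, mul_eq_one_comm.mp hU,
      Matrix.mul_one]
  simp only [qform, ← Complex.re_sum, hdiag, ← htrace]
  rfl

lemma Matrix.PosSemidef.ofReal_re_trace {M : Matrix (Fin d) (Fin d) ℂ} (hM : M.PosSemidef) :
    (M.trace.re : ℂ) = M.trace :=
  (Complex.eq_re_of_ofReal_le (r := 0) (by simpa using hM.trace_nonneg)).symm

lemma noise_eq_sum_mul_Hobs (M ρ : ι → Matrix (Fin d) (Fin d) ℂ) (v : Fin d → Fin d → ℂ)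
    (h : ∀ m a, qform (M m) (v a) = (M m).trace.re * qform (ρ m) (v a)) :
    noise M v = ∑ m, (M m).trace.re / d * Hobs v (ρ m) := by
  simp only [noise, Hobs, mul_neg, Finset.mul_sum, ← Finset.sum_neg_distrib, h]
  refine Finset.sum_congr rfl fun m _ => Finset.sum_congr rfl fun a _ => ?_
  set s := (M m).trace.re / d
  have hs : 1 / (d : ℝ) * (M m).trace.re = s := by ring
  rw [show 1 / (d : ℝ) * ((M m).trace.re * qform (ρ m) (v a)) = s * qform (ρ m) (v a) by ring, hs]
  rcases eq_or_ne s 0 with hs0 | hs0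
  · simp [hs0]
  · rw [mul_div_cancel_left₀ _ hs0]
    ring

lemma noise_smul (c : ℝ) (M : ι → Matrix (Fin d) (Fin d) ℂ) (v : Fin d → Fin d → ℂ) :
    noise (c • M) v = c * noise M v := by
  simp only [noise, Pi.smul_apply, qform_smul, Matrix.trace_smul, Complex.smul_re, smul_eq_mul,
    mul_neg, Finset.mul_sum]
  rcases eq_or_ne c 0 with rfl | hc
  · simp
  · congr 1
    refine Finset.sum_congr rfl fun m _ => Finset.sum_congr rfl fun a _ => ?_
    rw [show 1 / (d : ℝ) * (c * qform (M m) (v a)) / (1 / d * (c * (M m).trace.re))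
      = 1 / (d : ℝ) * qform (M m) (v a) / (1 / d * (M m).trace.re) by
        rw [mul_left_comm, mul_left_comm _ c, mul_div_mul_left _ _ hc]]
    ring

lemma noise_sumElim (M : ι → Matrix (Fin d) (Fin d) ℂ) (N : κ → Matrix (Fin d) (Fin d) ℂ)
    (v : Fin d → Fin d → ℂ) : noise (Sum.elim M N) v = noise M v + noise N v := by
  simp only [noise, Fintype.sum_sum_type, Sum.elim_inl, Sum.elim_inr]
  ring

lemma noise_comp_equiv (e : κ ≃ ι) (M : ι → Matrix (Fin d) (Fin d) ℂ) (v : Fin d → Fin d → ℂ) :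
    noise (M ∘ e) v = noise M v :=
  congrArg Neg.neg (Fintype.sum_equiv e _ _ fun _ => rfl)

lemma IsPOVM.comp_equiv {M : ι → Matrix (Fin d) (Fin d) ℂ} (hM : IsPOVM M) (e : κ ≃ ι) :
    IsPOVM (M ∘ e) :=
  ⟨fun m => hM.1 (e m), (Equiv.sum_comp e M).trans hM.2⟩

lemma IsPOVM.sumElim_smul {M : ι → Matrix (Fin d) (Fin d) ℂ} {N : κ → Matrix (Fin d) (Fin d) ℂ}
    (hM : IsPOVM M) (hN : IsPOVM N) {a b : ℝ} (ha : 0 ≤ a) (hb : 0 ≤ b) (hab : a + b = 1) :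
    IsPOVM (Sum.elim (a • M) (b • N)) := by
  refine ⟨Sum.rec (fun m => (hM.1 m).smul ha) (fun n => (hN.1 n).smul hb), ?_⟩
  rw [Fintype.sum_sum_type]
  simp only [Sum.elim_inl, Sum.elim_inr, Pi.smul_apply, ← Finset.smul_sum, hM.2, hN.2, ← add_smul,
    hab, one_smul]

def noiseRegion (vA vB : Fin d → Fin d → ℂ) : Set (ℝ × ℝ) :=
  {x | ∃ (k : ℕ) (M : Fin k → Matrix (Fin d) (Fin d) ℂ), IsPOVM M ∧ x = (noise M vA, noise M vB)}

def entropicRegion (vA vB : Fin d → Fin d → ℂ) : Set (ℝ × ℝ) :=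
  {x | ∃ ρ : Matrix (Fin d) (Fin d) ℂ, IsDensity ρ ∧ x = (Hobs vA ρ, Hobs vB ρ)}

lemma convex_noiseRegion (vA vB : Fin d → Fin d → ℂ) : Convex ℝ (noiseRegion vA vB) := by
  rintro _ ⟨k, M, hM, rfl⟩ _ ⟨l, N, hN, rfl⟩ a b ha hb hab
  refine ⟨k + l, Sum.elim (a • M) (b • N) ∘ finSumFinEquiv.symm,
    (hM.sumElim_smul hN ha hb hab).comp_equiv _, ?_⟩
  simp only [noise_comp_equiv, noise_sumElim, noise_smul, Prod.smul_mk, Prod.mk_add_mk,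
    smul_eq_mul]

lemma Matrix.PosSemidef.trace_re_eq_zero_iff {M : Matrix (Fin d) (Fin d) ℂ} (hM : M.PosSemidef) :
    M.trace.re = 0 ↔ M = 0 := by
  rw [← hM.trace_eq_zero_iff, ← hM.ofReal_re_trace, Complex.ofReal_eq_zero, Complex.ofReal_re]

-- The value at `M = 0` is an arbitrary state.
noncomputable def normalizedState (M : Matrix (Fin d) (Fin d) ℂ) : Matrix (Fin d) (Fin d) ℂ :=
  if M = 0 then (d : ℝ)⁻¹ • 1 else M.trace.re⁻¹ • M

lemma isDensity_normalizedState [NeZero d] {M : Matrix (Fin d) (Fin d) ℂ} (hM : M.PosSemidef) :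
    IsDensity (normalizedState M) := by
  unfold normalizedState
  split_ifs with h0
  · refine ⟨Matrix.PosSemidef.one.smul (by positivity), ?_⟩
    rw [Matrix.trace_smul, Matrix.trace_one, Fintype.card_fin, Complex.real_smul]
    push_cast
    exact inv_mul_cancel₀ (by exact_mod_cast NeZero.ne d)
  · refine ⟨hM.smul (inv_nonneg.mpr (Complex.nonneg_iff.mp hM.trace_nonneg).1), ?_⟩
    rw [Matrix.trace_smul, ← hM.ofReal_re_trace]
    simp [(not_congr hM.trace_re_eq_zero_iff).mpr h0]

lemma qform_eq_trace_mul_qform_normalizedState {M : Matrix (Fin d) (Fin d) ℂ} (hM : M.PosSemidef)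
    (x : Fin d → ℂ) : qform M x = M.trace.re * qform (normalizedState M) x := by
  unfold normalizedState
  split_ifs with h0
  · simp [h0]
  · rw [qform_smul, mul_inv_cancel_left₀ ((not_congr hM.trace_re_eq_zero_iff).mpr h0)]

lemma noisePair_mem_convexHull_entropicRegion [NeZero d] {M : ι → Matrix (Fin d) (Fin d) ℂ}
    (hM : IsPOVM M) (vA vB : Fin d → Fin d → ℂ) :
    (noise M vA, noise M vB) ∈ convexHull ℝ (entropicRegion vA vB) := by
  have hnoise (v : Fin d → Fin d → ℂ) :
      noise M v = ∑ m, (M m).trace.re / d * Hobs v (normalizedState (M m)) :=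
    noise_eq_sum_mul_Hobs _ _ v fun m _ => qform_eq_trace_mul_qform_normalizedState (hM.1 m) _
  have hweights : ∑ m, (M m).trace.re / d = 1 := by
    rw [← Finset.sum_div, ← Complex.re_sum, ← Matrix.trace_sum, hM.2, Matrix.trace_one]
    simp [NeZero.ne]
  have hmem := (convex_convexHull ℝ (entropicRegion vA vB)).sum_mem
    (fun m _ => div_nonneg (Complex.nonneg_iff.mp (hM.1 m).trace_nonneg).1 d.cast_nonneg)
    hweights fun m _ => subset_convexHull ℝ _ ⟨_, isDensity_normalizedState (hM.1 m), rfl⟩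
  convert hmem using 1
  simp [hnoise, Prod.ext_iff, Prod.fst_sum, Prod.snd_sum]

end

section Qubit
variable {ρ : Matrix (Fin 2) (Fin 2) ℂ}

lemma IsDensity.one_sub (hρ : IsDensity ρ) : IsDensity (1 - ρ) := by
  obtain ⟨hpsd, htr⟩ := hρ
  refine ⟨.of_dotProduct_mulVec_nonneg (Matrix.isHermitian_one.sub hpsd.1) fun x => ?_, ?_⟩
  · -- `tr ρ • 1 - ρ = adj ρ` gives `⟨x|1 - ρ|x⟩ = ⟨y|ρ|y⟩ + ‖x‖² (1 - tr ρ)`, `y = (-x̄₁, x̄₀)`.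
    set y : Fin 2 → ℂ := ![-star (x 1), star (x 0)]
    have key : star x ⬝ᵥ (1 - ρ) *ᵥ x = star y ⬝ᵥ ρ *ᵥ y + (star x ⬝ᵥ x) * (1 - ρ.trace) := by
      simp only [y, dotProduct, Matrix.mulVec, Fin.sum_univ_two, Pi.star_apply, Matrix.trace,
        Matrix.diag_apply, Matrix.sub_apply, Matrix.one_apply_eq, Matrix.cons_val_zero,
        Matrix.cons_val_one, star_neg, star_star, Matrix.one_apply_ne Fin.zero_ne_one,
        Matrix.one_apply_ne Fin.zero_ne_one.symm]
      ring
    rw [key, htr, sub_self, mul_zero, add_zero]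
    exact hpsd.dotProduct_mulVec_nonneg y
  · rw [Matrix.trace_sub, Matrix.trace_one, htr]
    norm_num

lemma Hobs_one_sub {v : Fin 2 → Fin 2 → ℂ} (hv : IsONB v) (hρ : IsDensity ρ) :
    Hobs v (1 - ρ) = Hobs v ρ := by
  have hsum : qform ρ (v 0) + qform ρ (v 1) = 1 := by
    simpa [Fin.sum_univ_two, hρ.2] using hv.sum_qform ρ
  have h0 : qform (1 - ρ) (v 0) = qform ρ (v 1) := by
    rw [qform_sub, hv.qform_one]; linarith
  have h1 : qform (1 - ρ) (v 1) = qform ρ (v 0) := by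
    rw [qform_sub, hv.qform_one]; linarith
  simp only [Hobs, Fin.sum_univ_two, h0, h1]
  ring

lemma IsDensity.isPOVM_pair (hρ : IsDensity ρ) : IsPOVM ![ρ, 1 - ρ] :=
  ⟨Fin.forall_fin_two.mpr ⟨hρ.1, hρ.one_sub.1⟩, by simp [Fin.sum_univ_two]⟩

lemma noise_pair {v : Fin 2 → Fin 2 → ℂ} (hv : IsONB v) (hρ : IsDensity ρ) :
    noise ![ρ, 1 - ρ] v = Hobs v ρ := by
  have htrace : ∀ m, (![ρ, 1 - ρ] m).trace.re = 1 :=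
    Fin.forall_fin_two.mpr ⟨by simp [hρ.2], by simp [hρ.one_sub.2]⟩
  rw [noise_eq_sum_mul_Hobs _ ![ρ, 1 - ρ] v fun m a => by rw [htrace, one_mul]]
  simp only [Fin.sum_univ_two, htrace, Matrix.cons_val_zero, Matrix.cons_val_one,
    Matrix.cons_val_fin_one, Hobs_one_sub hv hρ]
  push_cast
  ring

end Qubit

/-- For qubits, the set of noise pairs over all POVMs equals the convex hull of the entropic
uncertainty region `E(A,B)`. -/
theorem stmt_6 (vA vB : Fin 2 → Fin 2 → ℂ) (hA : IsONB vA) (hB : IsONB vB) :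
    {x : ℝ × ℝ | ∃ (k : ℕ) (M : Fin k → Matrix (Fin 2) (Fin 2) ℂ),
        IsPOVM M ∧ x = (noise M vA, noise M vB)} =
    convexHull ℝ {x : ℝ × ℝ | ∃ ρ : Matrix (Fin 2) (Fin 2) ℂ,
        IsDensity ρ ∧ x = (Hobs vA ρ, Hobs vB ρ)} := by
  change noiseRegion vA vB = convexHull ℝ (entropicRegion vA vB)
  refine Set.Subset.antisymm ?_ (convexHull_min ?_ (convex_noiseRegion vA vB))
  · rintro _ ⟨k, M, hM, rfl⟩
    exact noisePair_mem_convexHull_entropicRegion hM vA vB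
  · rintro _ ⟨ρ, hρ, rfl⟩
    exact ⟨2, _, hρ.isPOVM_pair, by rw [noise_pair hA hρ, noise_pair hB hρ]⟩
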